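/- arXiv:1203.6370 — 4 statements merged into one kernel-verified Lean document; each statement's English description precedes it below -/
import Mathlib

section
/- Let x, y be positive natural numbers and let n_x be the least natural number α such that x < 2^α. Then 2^{n_x} divides y if and only if the binomial coefficient C(y+2i, i) is even for every i = 1, ..., x. -/
/-!
By Lucas' theorem, `C(2^v a, 2^v b) ≡ C(a, b) (mod 2)`. Write `i = 2^v i'` with `i'` odd. If
`2^{n_x} ∣ y`, then `2^v ≤ i ≤ x` forces `v < n_x`, so `y + 2i = 2^v · (even)` and
`C(y + 2i, i) ≡ C(even, odd) ≡ 0` (Lucas on the last binary digit). Conversely, if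
`2^{n_x} ∤ y`, write `y = 2^v y'` with `y'` odd; then `v < n_x`, so `i = 2^v ≤ x` and
`C(y + 2i, i) ≡ C(y' + 2, 1) = y' + 2` is odd.
-/

namespace Choose

variable {p n k : ℕ} [Fact p.Prime]

theorem dvd_choose_of_dvd_of_not_dvd (hn : p ∣ n) (hk : ¬p ∣ k) : p ∣ n.choose k := by
  have hlow : (n % p).choose (k % p) = 0 := by
    rw [Nat.mod_eq_zero_of_dvd hn]
    exact Nat.choose_eq_zero_of_lt (Nat.pos_of_ne_zero fun h => hk (Nat.dvd_of_mod_eq_zero h))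
  rw [← Nat.modEq_zero_iff_dvd]
  simpa [hlow] using choose_modEq_choose_mod_mul_choose_div_nat (p := p) (n := n) (k := k)

end Choose

theorem pow_le_iff_lt_of_isLeast {b x nx v : ℕ} (hb : 0 < b)
    (hnx : IsLeast {α : ℕ | x < b ^ α} nx) : b ^ v ≤ x ↔ v < nx := by
  constructor
  · intro hv
    by_contra! h
    exact absurd (hnx.1.trans_le (Nat.pow_le_pow_right hb h)) (not_lt.mpr hv)
  · intro hv
    by_contra! h
    exact absurd (hnx.2 h) (not_le.mpr hv)

theorem two_dvd_choose_add_two_mul_of_odd {v i y : ℕ} (hi : Odd i) (hy : 2 ^ (v + 1) ∣ y) :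
    2 ∣ (y + 2 * (2 ^ v * i)).choose (2 ^ v * i) := by
  obtain ⟨m, rfl⟩ := hy
  have hsplit : 2 ^ (v + 1) * m + 2 * (2 ^ v * i) = 2 ^ v * (2 * (m + i)) := by ring
  rw [hsplit, (Choose.choose_pow_mul_pow_mul_modEq_choose_nat).dvd_iff dvd_rfl]
  exact Choose.dvd_choose_of_dvd_of_not_dvd (dvd_mul_right 2 _) hi.not_two_dvd_nat

theorem not_two_dvd_choose_add_two_mul_two_pow {v y : ℕ} (hy : Odd y) :
    ¬2 ∣ (2 ^ v * y + 2 * 2 ^ v).choose (2 ^ v) := by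
  have hsplit : 2 ^ v * y + 2 * 2 ^ v = 2 ^ v * (y + 2) := by ring
  have hlucas :=
    Choose.choose_pow_mul_pow_mul_modEq_choose_nat (p := 2) (k := v) (a := y + 2) (b := 1)
  rw [mul_one, Nat.choose_one_right] at hlucas
  rw [hsplit, hlucas.dvd_iff dvd_rfl, ← even_iff_two_dvd, Nat.even_add]
  simpa using hy

theorem kostka_binomial_even_iff_general (x y : ℕ)
    (nx : ℕ) (hnx : IsLeast {α : ℕ | x < 2 ^ α} nx) :
    2 ^ nx ∣ y ↔ ∀ i : ℕ, 1 ≤ i → i ≤ x → 2 ∣ Nat.choose (y + 2 * i) i := by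
  constructor
  · intro hy i hi hix
    obtain ⟨v, i', hi', rfl⟩ := Nat.exists_eq_two_pow_mul_odd (n := i) (by omega)
    have hv : v < nx := (pow_le_iff_lt_of_isLeast two_pos hnx).mp
      ((Nat.le_mul_of_pos_right _ hi'.pos).trans hix)
    exact two_dvd_choose_add_two_mul_of_odd hi' ((pow_dvd_pow 2 hv).trans hy)
  · intro h
    by_contra hy
    obtain ⟨v, y', hy', rfl⟩ :=
      Nat.exists_eq_two_pow_mul_odd (n := y) (by rintro rfl; simp at hy)
    have hv : v < nx := by
      by_contra! hle
      exact hy (Dvd.dvd.mul_right (pow_dvd_pow 2 hle) _)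
    exact not_two_dvd_choose_add_two_mul_two_pow hy'
      (h (2 ^ v) Nat.one_le_two_pow ((pow_le_iff_lt_of_isLeast two_pos hnx).mpr hv))

theorem kostka_binomial_even_iff (x y : ℕ) (hx : 0 < x) (hy : 0 < y)
    (nx : ℕ) (hnx : IsLeast {α : ℕ | x < 2 ^ α} nx) :
    2 ^ nx ∣ y ↔ ∀ i : ℕ, 1 ≤ i → i ≤ x → 2 ∣ Nat.choose (y + 2 * i) i :=
  kostka_binomial_even_iff_general x y nx hnx
end

section
/- Let x, y be positive natural numbers and let n_x be the least natural number α such that x < 2^α. If 2^{n_x} does not divide y, then x ≥ 2^{ν(y)} and the binomial coefficient C(y + 2^{ν(y)+1}, 2^{ν(y)}) is odd, where ν(y) is the 2-adic valuation of y. -/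
/-
With `v = ν(y)`, write `y = 2^v m` with `m` odd. Since `2^{n_x} ∤ y` we have `v < n_x`, so
`2^v ≤ x` by minimality of `n_x`. Moreover `y + 2^{v+1} = 2^v (m + 2)`, and by Lucas' theorem
`C(2^v (m + 2), 2^v) ≡ C(m + 2, 1) = m + 2 ≡ 1 (mod 2)`.
-/

lemma pow_le_of_lt_of_isLeast {b x n k : ℕ} (hn : IsLeast {α : ℕ | x < b ^ α} n) (hk : k < n) :
    b ^ k ≤ x :=
  not_lt.mp fun h => (hn.2 h).not_gt hk

lemma padicValNat_lt_of_not_pow_dvd {p n k : ℕ} (hp : p ≠ 1) (h : ¬ p ^ k ∣ n) :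
    padicValNat p n < k := by
  have hn : n ≠ 0 := by rintro rfl; exact h (dvd_zero _)
  exact not_le.mp fun hle => h ((Nat.pow_dvd_iff_le_padicValNat hp hn).mpr hle)

lemma choose_pow_mul_pow_modEq {p : ℕ} [Fact p.Prime] (k a : ℕ) :
    (p ^ k * a).choose (p ^ k) ≡ a [MOD p] := by
  simpa using Choose.choose_pow_mul_pow_mul_modEq_choose_nat (p := p) (k := k) (a := a) (b := 1)

lemma odd_choose_add_two_pow_succ_padicValNat {y : ℕ} (hy : y ≠ 0) :
    Odd ((y + 2 ^ (padicValNat 2 y + 1)).choose (2 ^ padicValNat 2 y)) := by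
  have hdvd : 2 ^ padicValNat 2 y ∣ y := pow_padicValNat_dvd
  have hndvd : ¬ 2 ^ (padicValNat 2 y + 1) ∣ y := pow_succ_padicValNat_not_dvd hy
  generalize padicValNat 2 y = v at hdvd hndvd ⊢
  obtain ⟨m, rfl⟩ := hdvd
  have hm_odd : Odd m := by
    refine Nat.not_even_iff_odd.mp fun ⟨c, hc⟩ => hndvd ⟨c, ?_⟩
    rw [hc, pow_succ]; ring
  have hsum : 2 ^ v * m + 2 ^ (v + 1) = 2 ^ v * (m + 2) := by ring
  rw [hsum, Nat.odd_iff, choose_pow_mul_pow_modEq]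
  exact Nat.odd_iff.mp (hm_odd.add_even even_two)

theorem kostka_binomial_odd_general (x y : ℕ)
    (nx : ℕ) (hnx : IsLeast {α : ℕ | x < 2 ^ α} nx)
    (hnd : ¬ 2 ^ nx ∣ y) :
    2 ^ padicValNat 2 y ≤ x ∧
      Odd (Nat.choose (y + 2 ^ (padicValNat 2 y + 1)) (2 ^ padicValNat 2 y)) := by
  have hy : y ≠ 0 := by rintro rfl; exact hnd (dvd_zero _)
  exact ⟨pow_le_of_lt_of_isLeast hnx (padicValNat_lt_of_not_pow_dvd (by norm_num) hnd),
    odd_choose_add_two_pow_succ_padicValNat hy⟩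

theorem kostka_binomial_odd (x y : ℕ) (hx : 0 < x) (hy : 0 < y)
    (nx : ℕ) (hnx : IsLeast {α : ℕ | x < 2 ^ α} nx)
    (hnd : ¬ 2 ^ nx ∣ y) :
    2 ^ padicValNat 2 y ≤ x ∧
      Odd (Nat.choose (y + 2 ^ (padicValNat 2 y + 1)) (2 ^ padicValNat 2 y)) :=
  kostka_binomial_odd_general x y nx hnx hnd
end

section
/- Let j, r be natural numbers with r even and r ≥ 2j > 0, and let n_j be the least α with j < 2^α. Then the following are equivalent: (1) 2^{n_j} divides r - 2j; (2) for every s with 0 ≤ s < j, the binomial coefficient C(r - 2s, j - s) is even. -/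
/-!
Put `m = r - 2j` and `k = j - s`, so that condition (2) says `C(m + 2k, k)` is even for
`0 < k ≤ j`. Write `k = 2^i k'` with `k'` odd. If `2^{n_j} ∣ m` then `2^{i+1} ∣ m`, and Lucas's
theorem reduces `C(m + 2k, k)` modulo 2 to `C(even, k')`, which vanishes. Conversely, if
`m = 2^v u` with `u` odd and `v < n_j`, then `k = 2^v ≤ j` by minimality of `n_j`, and
`C(2^v (u + 2), 2^v) ≡ u + 2` is odd.
-/

namespace Nat

theorem two_dvd_choose_of_even_of_odd {n k : ℕ} (hn : Even n) (hk : Odd k) :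
    2 ∣ n.choose k := by
  have h := Choose.choose_modEq_choose_mod_mul_choose_div_nat (n := n) (k := k) (p := 2)
  rw [Nat.even_iff.mp hn, Nat.odd_iff.mp hk, choose_zero_succ, zero_mul] at h
  exact Nat.modEq_zero_iff_dvd.mp h

theorem choose_pow_mul_pow_modEq {p : ℕ} [Fact p.Prime] (v u : ℕ) :
    (p ^ v * u).choose (p ^ v) ≡ u [MOD p] := by
  simpa using Choose.choose_pow_mul_pow_mul_modEq_choose_nat (p := p) (k := v) (a := u) (b := 1)

theorem two_dvd_choose_add_two_mul {n m k : ℕ} (hm : 2 ^ n ∣ m) (hk₀ : 0 < k)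
    (hkn : k < 2 ^ n) : 2 ∣ (m + 2 * k).choose k := by
  obtain ⟨i, k', hk', rfl⟩ := exists_eq_two_pow_mul_odd hk₀.ne'
  have hin : i + 1 ≤ n := by
    have : 2 ^ i < 2 ^ n := (Nat.le_mul_of_pos_right _ hk'.pos).trans_lt hkn
    exact (Nat.pow_lt_pow_iff_right (by norm_num)).mp this
  obtain ⟨m', rfl⟩ := (pow_dvd_pow 2 hin).trans hm
  have hsplit : 2 ^ (i + 1) * m' + 2 * (2 ^ i * k') = 2 ^ i * (2 * (m' + k')) := by ring
  rw [hsplit, (Choose.choose_pow_mul_pow_mul_modEq_choose_nat (p := 2)).dvd_iff dvd_rfl]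
  exact two_dvd_choose_of_even_of_odd (even_two_mul _) hk'

theorem not_two_dvd_choose_two_pow_mul_add {v u : ℕ} (hu : Odd u) :
    ¬ 2 ∣ (2 ^ v * u + 2 * 2 ^ v).choose (2 ^ v) := by
  rw [show 2 ^ v * u + 2 * 2 ^ v = 2 ^ v * (u + 2) by ring,
    (choose_pow_mul_pow_modEq (p := 2) v (u + 2)).dvd_iff dvd_rfl, ← even_iff_two_dvd,
    Nat.not_even_iff_odd]
  exact hu.add_even even_two

theorem two_pow_dvd_iff_forall_two_dvd_choose_add_two_mul {m j n : ℕ}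
    (hn : IsLeast {α : ℕ | j < 2 ^ α} n) :
    2 ^ n ∣ m ↔ ∀ k, 0 < k → k ≤ j → 2 ∣ (m + 2 * k).choose k := by
  refine ⟨fun hm k hk₀ hkj => two_dvd_choose_add_two_mul hm hk₀ (hkj.trans_lt hn.1), ?_⟩
  contrapose!
  intro hm
  have hm₀ : m ≠ 0 := by rintro rfl; exact hm (dvd_zero _)
  obtain ⟨v, u, hu, rfl⟩ := exists_eq_two_pow_mul_odd hm₀
  have hvn : v < n := by
    by_contra! hnv
    exact hm ((pow_dvd_pow 2 hnv).trans (dvd_mul_right _ _))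
  have hvj : 2 ^ v ≤ j := by
    by_contra! hjv
    exact (hn.2 hjv).not_gt hvn
  exact ⟨2 ^ v, Nat.two_pow_pos v, hvj, not_two_dvd_choose_two_pow_mul_add hu⟩

end Nat

theorem indecomposable_two_part_criterion_general (j r : ℕ) (hjr : 2 * j ≤ r)
    (nj : ℕ) (hnj : IsLeast {α : ℕ | j < 2 ^ α} nj) :
    2 ^ nj ∣ (r - 2 * j) ↔ ∀ s : ℕ, s < j → 2 ∣ Nat.choose (r - 2 * s) (j - s) := by
  rw [Nat.two_pow_dvd_iff_forall_two_dvd_choose_add_two_mul hnj]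
  constructor
  · intro h s hs
    have := h (j - s) (by omega) (by omega)
    rwa [show r - 2 * j + 2 * (j - s) = r - 2 * s by omega] at this
  · intro h k hk₀ hkj
    have := h (j - k) (by omega)
    rwa [show r - 2 * (j - k) = r - 2 * j + 2 * k by omega,
      show j - (j - k) = k by omega] at this

theorem indecomposable_two_part_criterion (j r : ℕ) (hr : Even r)
    (hj : 0 < j) (hjr : 2 * j ≤ r)
    (nj : ℕ) (hnj : IsLeast {α : ℕ | j < 2 ^ α} nj) :
    2 ^ nj ∣ (r - 2 * j) ↔ ∀ s : ℕ, s < j → 2 ∣ Nat.choose (r - 2 * s) (j - s) :=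
  indecomposable_two_part_criterion_general j r hjr nj hnj
end

section
/- Let r be even, 2^n ≤ r < 2^{n+1}, and let 0 < j ≤ r/2 with n_j the least α such that j < 2^α. Then 2^{n_j} divides r - 2j if and only if 2^{i-1} ≤ j < 2^i and j ≡ (r - 2^n)/2 (mod 2^{i-1}), where i = n_j. -/
/-!
Write `r = 2 ^ n + 2 t`. The least `α` with `j < 2 ^ α` is the binary length `k + 1` of `j`, and
`2 j ≤ r < 2 ^ (n + 1)` forces `k < n`. Then `r - 2 j = 2 (2 ^ n / 2 + t - j)` and `2 ^ k` divides
`2 ^ n / 2`, so `2 ^ (k + 1) ∣ r - 2 j` says exactly that `j ≡ t [MOD 2 ^ k]`.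
-/

theorem Nat.isLeast_size (j : ℕ) : IsLeast {α : ℕ | j < 2 ^ α} j.size :=
  ⟨j.lt_size_self, fun _ h => Nat.size_le.2 h⟩

theorem Nat.two_pow_succ_dvd_two_pow_add_sub_iff {k n t j : ℕ} (hkn : k < n)
    (hj : 2 * j ≤ 2 ^ n + 2 * t) :
    2 ^ (k + 1) ∣ 2 ^ n + 2 * t - 2 * j ↔ j % 2 ^ k = t % 2 ^ k := by
  obtain ⟨m, rfl⟩ := Nat.exists_eq_add_of_lt hkn
  rw [pow_succ, pow_add] at hj
  have halve : 2 ^ (k + m + 1) + 2 * t - 2 * j = 2 * (2 ^ k * 2 ^ m + t - j) := by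
    rw [pow_succ, pow_add]
    omega
  rw [halve, pow_succ', Nat.mul_dvd_mul_iff_left two_pos, ← Nat.modEq_iff_dvd' (by omega)]
  simp only [Nat.ModEq, Nat.mul_add_mod]

theorem divisibility_iff_congruence (r n j : ℕ) (hr : Even r)
    (h1 : 2 ^ n ≤ r) (h2 : r < 2 ^ (n + 1)) (hj : 0 < j) (hjr : 2 * j ≤ r)
    (nj : ℕ) (hnj : IsLeast {α : ℕ | j < 2 ^ α} nj) :
    2 ^ nj ∣ (r - 2 * j) ↔
      (2 ^ (nj - 1) ≤ j ∧ j < 2 ^ nj ∧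
        j % 2 ^ (nj - 1) = ((r - 2 ^ n) / 2) % 2 ^ (nj - 1)) := by
  have hsize : nj = j.size := hnj.unique j.isLeast_size
  obtain ⟨k, rfl⟩ : ∃ k, nj = k + 1 := ⟨j.size - 1, by have := Nat.size_pos.2 hj; omega⟩
  have hlow : 2 ^ k ≤ j := Nat.lt_size.1 (by omega)
  have hkn : k < n := by
    have : 2 ^ (k + 1) < 2 ^ (n + 1) := by rw [pow_succ]; omega
    exact Nat.succ_lt_succ_iff.1 ((Nat.pow_lt_pow_iff_right one_lt_two).1 this)
  obtain ⟨t, rfl⟩ : ∃ t, r = 2 ^ n + 2 * t := by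
    obtain ⟨t, ht⟩ := (Nat.even_sub h1).2 (iff_of_true hr (Nat.even_pow.2 ⟨even_two, by omega⟩))
    exact ⟨t, by omega⟩
  have hhalf : (2 ^ n + 2 * t - 2 ^ n) / 2 = t := by omega
  rw [hhalf, Nat.add_sub_cancel, Nat.two_pow_succ_dvd_two_pow_add_sub_iff hkn hjr]
  have hhigh : j < 2 ^ (k + 1) := hnj.1
  simp only [hlow, hhigh, true_and]
end
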